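/- In the electricity pool model (P2), the upper bound of MCI, UBMCI(E) = a·max_{1 ≤ t ≤ T} g*_t(E) + b, is monotonically non-increasing in E on [0, ∞); equivalently, the map E ↦ max_t g*_t(E) is non-increasing. -/

import Mathlib

open Finset Filter

/-- Feasibility for the electricity pool model (P2) at storage capacity `E`:
the states of charge `x_k = E/2 + ∑_{t ≤ k} u t` (with `x_0 = E/2`) satisfy
`0 ≤ x_k ≤ E` for all `k`, and the terminal condition `x_T = E/2` holds. -/
def poolFeasible (T : ℕ) (E : ℝ) (u : Fin T → ℝ) : Prop :=
  (∀ k : Fin T, 0 ≤ E / 2 + ∑ t ∈ Finset.Iic k, u t) ∧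
  (∀ k : Fin T, E / 2 + ∑ t ∈ Finset.Iic k, u t ≤ E) ∧
  E / 2 + ∑ t, u t = E / 2

/-- Total generation cost `∑ t C (d t + u t)` with `C g = (1/2)·a·g² + b·g + c`. -/
noncomputable def poolCost (T : ℕ) (a b c : ℝ) (d u : Fin T → ℝ) : ℝ :=
  ∑ t, ((1 / 2) * a * (d t + u t) ^ 2 + b * (d t + u t) + c)

/-- Optimal cost `C*(E)` of the pool model (P2). -/
noncomputable def poolCstar (T : ℕ) (a b c : ℝ) (d : Fin T → ℝ) (E : ℝ) : ℝ :=
  sInf {y : ℝ | ∃ u : Fin T → ℝ, poolFeasible T E u ∧ y = poolCost T a b c d u}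

/-! Moving `ε` units of generation from an hour `t` to a cheaper hour `s` changes the cost by
`a ε (g_s - g_t + ε) < 0` for small `ε`. At an optimum every such move must therefore be
blocked by a storage bound that is tight between the two hours: the store is empty at some hour
of `[t, s)` if `s` is later, full at some hour of `[s, t)` if `s` is earlier.

Let `u` be optimal at `E₂` and `v` feasible at `E₁ ≤ E₂`, hence at `E₂`, and suppose the peak
`g_u(t₀)` exceeds every `g_v(t)`, where `g_w = d + w`. Then `u t₀ > v t₀`, so the difference
`φ` of the cumulative charges of `u` and `v` jumps up at `t₀`: it is positive just after `t₀`
or negative just before. Following that run of constant sign to the hour `s` where `φ` crosses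
back gives `u s < v s`, so `g_u(s) < g_u(t₀)`, while along the run the store of `u` stays
strictly above (below) that of `v`, hence is never empty (full): nothing blocks the move from
`t₀` to `s`. -/

namespace Nat

theorem exists_maximal_run_from {P : ℕ → Prop} {i j : ℕ} (hij : i ≤ j) (hi : P i)
    (hj : ¬P j) : ∃ k, i ≤ k ∧ k < j ∧ (∀ l, i ≤ l → l ≤ k → P l) ∧ ¬P (k + 1) := by
  classical
  have hex : ∃ m, i ≤ m ∧ ¬P m := ⟨j, hij, hj⟩
  obtain ⟨him, hm⟩ := Nat.find_spec hex
  have hne : Nat.find hex ≠ i := fun h => hm (h.symm ▸ hi)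
  have hmj : Nat.find hex ≤ j := Nat.find_min' hex ⟨hij, hj⟩
  refine ⟨Nat.find hex - 1, by omega, by omega, fun l hil hlk => ?_,
    by rwa [Nat.sub_add_cancel (by omega)]⟩
  by_contra hl
  exact Nat.find_min hex (by omega) ⟨hil, hl⟩

theorem exists_maximal_run_to {P : ℕ → Prop} {i j : ℕ} (hij : i ≤ j) (hi : ¬P i)
    (hj : P j) : ∃ k, i ≤ k ∧ k < j ∧ ¬P k ∧ ∀ l, k < l → l ≤ j → P l := by
  classical
  have hk : ¬P (Nat.findGreatest (¬P ·) j) :=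
    Nat.findGreatest_spec (P := (¬P ·)) hij hi
  have hik : i ≤ Nat.findGreatest (¬P ·) j := Nat.le_findGreatest hij hi
  have hkj : Nat.findGreatest (¬P ·) j ≤ j := Nat.findGreatest_le j
  refine ⟨_, hik, lt_of_le_of_ne hkj fun h => hk (h.symm ▸ hj), hk, fun l hkl hlj => ?_⟩
  simpa using Nat.findGreatest_is_greatest hkl hlj

end Nat

section PrefixSum

variable {M : Type*} [AddCommMonoid M] {T : ℕ}

def prefixSum (u : Fin T → M) (n : ℕ) : M := ∑ t : Fin T with t.val < n, u t

@[simp] lemma prefixSum_zero (u : Fin T → M) : prefixSum u 0 = 0 := by simp [prefixSum]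

lemma prefixSum_succ (u : Fin T → M) (k : Fin T) :
    prefixSum u (k + 1) = prefixSum u k + u k := by
  have : univ.filter (fun t : Fin T => t.val < k + 1) =
      insert k (univ.filter fun t : Fin T => t.val < k) := by
    ext t; simp only [mem_filter, mem_univ, true_and, mem_insert, Fin.ext_iff]; omega
  rw [prefixSum, this, sum_insert (by simp), add_comm, prefixSum]

lemma prefixSum_self (u : Fin T → M) : prefixSum u T = ∑ t, u t := by
  simp [prefixSum]

lemma sum_Iic_eq_prefixSum (u : Fin T → M) (k : Fin T) :
    ∑ t ∈ Iic k, u t = prefixSum u (k + 1) := by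
  refine sum_congr ?_ fun _ _ => rfl
  ext t; simp only [mem_Iic, mem_filter, mem_univ, true_and, Fin.le_def]; omega

end PrefixSum

section Pool

variable {T : ℕ} {a b c E : ℝ} {d u v : Fin T → ℝ}

lemma poolFeasible.mono {E₁ E₂ : ℝ} (h : poolFeasible T E₁ u) (hE : E₁ ≤ E₂) :
    poolFeasible T E₂ u :=
  ⟨fun k => by linarith [h.1 k], fun k => by linarith [h.2.1 k], by linarith [h.2.2]⟩

def transfer (u : Fin T → ℝ) (s t : Fin T) (ε : ℝ) : Fin T → ℝ :=
  u + Pi.single s ε - Pi.single t ε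

lemma sum_Iic_transfer (u : Fin T → ℝ) (s t k : Fin T) (ε : ℝ) :
    ∑ i ∈ Iic k, transfer u s t ε i =
      ∑ i ∈ Iic k, u i + (if s ≤ k then ε else 0) - (if t ≤ k then ε else 0) := by
  simp [transfer, sum_add_distrib, sum_sub_distrib]

lemma sum_transfer (u : Fin T → ℝ) (s t : Fin T) (ε : ℝ) :
    ∑ i, transfer u s t ε i = ∑ i, u i := by
  simp [transfer, sum_add_distrib, sum_sub_distrib]

lemma poolFeasible.transfer_later {s t : Fin T} {ε : ℝ} (hu : poolFeasible T E u)
    (hts : t < s) (hε : 0 ≤ ε) (h : ∀ k ∈ Ico t s, ε ≤ E / 2 + ∑ i ∈ Iic k, u i) :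
    poolFeasible T E (transfer u s t ε) := by
  refine ⟨fun k => ?_, fun k => ?_, by rw [sum_transfer, hu.2.2]⟩ <;>
  · rw [sum_Iic_transfer]
    have := hu.1 k
    have := hu.2.1 k
    by_cases hsk : s ≤ k
    · simp only [hsk, hts.le.trans hsk, if_true]; linarith
    by_cases htk : t ≤ k
    · have := h k (mem_Ico.2 ⟨htk, not_le.1 hsk⟩)
      simp only [hsk, htk, if_true, if_false]; linarith
    · simp only [hsk, htk, if_false]; linarith

lemma poolFeasible.transfer_earlier {s t : Fin T} {ε : ℝ} (hu : poolFeasible T E u)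
    (hst : s < t) (hε : 0 ≤ ε) (h : ∀ k ∈ Ico s t, E / 2 + ∑ i ∈ Iic k, u i + ε ≤ E) :
    poolFeasible T E (transfer u s t ε) := by
  refine ⟨fun k => ?_, fun k => ?_, by rw [sum_transfer, hu.2.2]⟩ <;>
  · rw [sum_Iic_transfer]
    have := hu.1 k
    have := hu.2.1 k
    by_cases htk : t ≤ k
    · simp only [htk, hst.le.trans htk, if_true]; linarith
    by_cases hsk : s ≤ k
    · have := h k (mem_Ico.2 ⟨hsk, not_le.1 htk⟩)
      simp only [hsk, htk, if_true, if_false]; linarith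
    · simp only [hsk, htk, if_false]; linarith

lemma sum_comp_transfer (f : ℝ → ℝ) (d u : Fin T → ℝ) {s t : Fin T} (hst : s ≠ t)
    (ε : ℝ) :
    ∑ i, f (d i + transfer u s t ε i) = ∑ i, f (d i + u i) +
      ((f (d s + u s + ε) - f (d s + u s)) + (f (d t + u t - ε) - f (d t + u t))) := by
  have key : ∀ i, f (d i + transfer u s t ε i) = f (d i + u i) +
      ((if i = s then f (d s + u s + ε) - f (d s + u s) else 0) +
        (if i = t then f (d t + u t - ε) - f (d t + u t) else 0)) := by
    intro i
    by_cases his : i = s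
    · subst his; simp [transfer, hst, add_assoc]
    by_cases hit : i = t
    · subst hit; simp [transfer, his, sub_eq_add_neg, add_assoc]
    · simp [transfer, his, hit]
  simp only [key, sum_add_distrib, sum_ite_eq', mem_univ, if_true]

lemma poolCost_transfer {s t : Fin T} (hst : s ≠ t) (ε : ℝ) :
    poolCost T a b c d (transfer u s t ε) =
      poolCost T a b c d u + a * ε * (d s + u s - (d t + u t) + ε) := by
  rw [poolCost, poolCost, sum_comp_transfer (fun g => 1 / 2 * a * g ^ 2 + b * g + c) d u hst]
  ring

lemma poolCost_bddBelow (ha : 0 < a) : BddBelow (Set.range (poolCost T a b c d)) := by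
  refine ⟨T * (c - b ^ 2 / (2 * a)), ?_⟩
  rintro _ ⟨u, rfl⟩
  have hterm : ∀ g : ℝ, c - b ^ 2 / (2 * a) ≤ 1 / 2 * a * g ^ 2 + b * g + c := by
    intro g
    have : 1 / 2 * a * g ^ 2 + b * g + b ^ 2 / (2 * a) = (a * g + b) ^ 2 / (2 * a) := by
      field_simp; ring
    have : 0 ≤ (a * g + b) ^ 2 / (2 * a) := by positivity
    linarith
  calc (T : ℝ) * (c - b ^ 2 / (2 * a)) = ∑ _t : Fin T, (c - b ^ 2 / (2 * a)) := by
        simp [mul_sub]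
    _ ≤ poolCost T a b c d u := sum_le_sum fun t _ => hterm (d t + u t)

def IsPoolOptimal (T : ℕ) (a b c : ℝ) (d : Fin T → ℝ) (E : ℝ) (u : Fin T → ℝ) : Prop :=
  poolFeasible T E u ∧ ∀ v, poolFeasible T E v → poolCost T a b c d u ≤ poolCost T a b c d v

lemma poolCstar_le_poolCost (ha : 0 < a) (hv : poolFeasible T E v) :
    poolCstar T a b c d E ≤ poolCost T a b c d v :=
  csInf_le ((poolCost_bddBelow ha).mono (by rintro _ ⟨w, -, rfl⟩; exact ⟨w, rfl⟩))
    ⟨v, hv, rfl⟩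

lemma isPoolOptimal_of_poolCost_eq_poolCstar (ha : 0 < a) (hu : poolFeasible T E u)
    (h : poolCost T a b c d u = poolCstar T a b c d E) : IsPoolOptimal T a b c d E u :=
  ⟨hu, fun _ hv => h.trans_le (poolCstar_le_poolCost ha hv)⟩

lemma IsPoolOptimal.exists_transfer_not_poolFeasible (ha : 0 < a)
    (hopt : IsPoolOptimal T a b c d E u) {s t : Fin T} (hst : s ≠ t)
    (hlt : d s + u s < d t + u t) {δ : ℝ} (hδ : 0 < δ) :
    ∃ ε, 0 < ε ∧ ε ≤ δ ∧ ¬poolFeasible T E (transfer u s t ε) := by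
  set ε := min δ ((d t + u t - (d s + u s)) / 2)
  have hε : 0 < ε := lt_min hδ (by linarith)
  have hεgap : ε ≤ (d t + u t - (d s + u s)) / 2 := min_le_right _ _
  refine ⟨ε, hε, min_le_left _ _, fun hfeas => ?_⟩
  have hgain : a * ε * (d s + u s - (d t + u t) + ε) < 0 :=
    mul_neg_of_pos_of_neg (mul_pos ha hε) (by linarith)
  have hcost := hopt.2 _ hfeas
  rw [poolCost_transfer hst] at hcost
  linarith

lemma IsPoolOptimal.exists_empty_of_lt (ha : 0 < a) (hopt : IsPoolOptimal T a b c d E u)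
    {s t : Fin T} (hts : t < s) (hlt : d s + u s < d t + u t) :
    ∃ k ∈ Ico t s, E / 2 + ∑ i ∈ Iic k, u i = 0 := by
  by_contra! hslack
  obtain ⟨k₀, hk₀, hmin⟩ :=
    (Ico t s).exists_min_image (fun k => E / 2 + ∑ i ∈ Iic k, u i) ⟨t, by simpa using hts⟩
  obtain ⟨ε, hε, hεδ, hinfeas⟩ := hopt.exists_transfer_not_poolFeasible ha hts.ne' hlt
    ((hopt.1.1 k₀).lt_of_ne' (hslack k₀ hk₀))
  exact hinfeas (hopt.1.transfer_later hts hε.le fun k hk => hεδ.trans (hmin k hk))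

lemma IsPoolOptimal.exists_full_of_lt (ha : 0 < a) (hopt : IsPoolOptimal T a b c d E u)
    {s t : Fin T} (hst : s < t) (hlt : d s + u s < d t + u t) :
    ∃ k ∈ Ico s t, E / 2 + ∑ i ∈ Iic k, u i = E := by
  by_contra! hslack
  obtain ⟨k₀, hk₀, hmax⟩ :=
    (Ico s t).exists_max_image (fun k => E / 2 + ∑ i ∈ Iic k, u i) ⟨s, by simpa using hst⟩
  obtain ⟨ε, hε, hεδ, hinfeas⟩ := hopt.exists_transfer_not_poolFeasible ha hst.ne hlt
    (sub_pos.2 ((hopt.1.2.1 k₀).lt_of_ne (hslack k₀ hk₀)))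
  exact hinfeas (hopt.1.transfer_earlier hst hε.le fun k hk => by linarith [hmax k hk])

lemma IsPoolOptimal.exists_le_of_poolFeasible (ha : 0 < a)
    (hopt : IsPoolOptimal T a b c d E u) (hv : poolFeasible T E v) (t₀ : Fin T) :
    ∃ t, d t₀ + u t₀ ≤ d t + v t := by
  by_contra! hpeak
  set φ : ℕ → ℝ := fun n => prefixSum u n - prefixSum v n
  have hφ_zero : φ 0 = 0 := by simp [φ]
  have hφ_T : φ T = 0 := by simp only [φ, prefixSum_self]; linarith [hopt.1.2.2, hv.2.2]
  have hφ_succ (k : Fin T) : φ (k + 1) = φ k + (u k - v k) := by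
    simp only [φ, prefixSum_succ]; ring
  have hcharge (k : Fin T) :
      E / 2 + ∑ i ∈ Iic k, u i = E / 2 + ∑ i ∈ Iic k, v i + φ (k + 1) := by
    simp only [φ, sum_Iic_eq_prefixSum]; ring
  have hcheaper (s : Fin T) (hs : u s < v s) : d s + u s < d t₀ + u t₀ := by
    linarith [hpeak s]
  rcases lt_or_ge 0 (φ (t₀ + 1)) with hpos | hnonpos
  · obtain ⟨n, htn, hnT, hrun, hexit⟩ :=
      Nat.exists_maximal_run_from (P := (0 < φ ·)) t₀.2 hpos (by simp [hφ_T])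
    obtain ⟨s, rfl⟩ : ∃ s : Fin T, (s : ℕ) = n := ⟨⟨n, hnT⟩, rfl⟩
    have hus : u s < v s := by linarith [hφ_succ s, hrun s htn le_rfl, not_lt.1 hexit]
    obtain ⟨k, hk, hempty⟩ :=
      hopt.exists_empty_of_lt ha (Fin.lt_def.2 (by omega)) (hcheaper s hus)
    obtain ⟨htk, hks⟩ := mem_Ico.1 hk
    linarith [hcharge k, hv.1 k, hrun (k + 1) (by omega) (by omega)]
  · have hneg : φ t₀ < 0 := by linarith [hφ_succ t₀, hpeak t₀]
    obtain ⟨n, -, hnt, hexit, hrun⟩ :=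
      Nat.exists_maximal_run_to (P := (φ · < 0)) (Nat.zero_le t₀) (by simp [hφ_zero]) hneg
    obtain ⟨s, rfl⟩ : ∃ s : Fin T, (s : ℕ) = n := ⟨⟨n, hnt.trans t₀.2⟩, rfl⟩
    have hus : u s < v s := by
      linarith [hφ_succ s, hrun (s + 1) (by omega) hnt, not_lt.1 hexit]
    obtain ⟨k, hk, hfull⟩ :=
      hopt.exists_full_of_lt ha (Fin.lt_def.2 hnt) (hcheaper s hus)
    obtain ⟨hsk, hkt⟩ := mem_Ico.1 hk
    linarith [hcharge k, hv.2.1 k, hrun (k + 1) (by omega) (by omega)]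

end Pool

/-- In the pool model (P2),
`UBMCI(E) = a·max_t g*_t(E) + b` is monotonically non-increasing in `E` on
`[0, ∞)`; equivalently `E ↦ max_t g*_t(E)` is non-increasing. Here `gstar`
is any selection of optimal generation profiles. -/
theorem pool_ubmci_antitone
    (T : ℕ) (hT : 1 ≤ T) (a b c : ℝ) (ha : 0 < a) (d : Fin T → ℝ)
    (gstar : ℝ → Fin T → ℝ)
    (hgstar : ∀ E : ℝ, 0 ≤ E → ∃ u : Fin T → ℝ, poolFeasible T E u ∧
      (∀ t, gstar E t = d t + u t) ∧
      poolCost T a b c d u = poolCstar T a b c d E) :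
    ∀ E₁ E₂ : ℝ, 0 ≤ E₁ → E₁ ≤ E₂ →
      a * Finset.univ.sup' ⟨⟨0, hT⟩, Finset.mem_univ _⟩ (gstar E₂) + b ≤
        a * Finset.univ.sup' ⟨⟨0, hT⟩, Finset.mem_univ _⟩ (gstar E₁) + b ∧
      Finset.univ.sup' ⟨⟨0, hT⟩, Finset.mem_univ _⟩ (gstar E₂) ≤
        Finset.univ.sup' ⟨⟨0, hT⟩, Finset.mem_univ _⟩ (gstar E₁) := by
  intro E₁ E₂ hE₁ hE
  obtain ⟨u₁, hu₁, hg₁, -⟩ := hgstar E₁ hE₁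
  obtain ⟨u₂, hu₂, hg₂, hcost₂⟩ := hgstar E₂ (hE₁.trans hE)
  have hopt := isPoolOptimal_of_poolCost_eq_poolCstar ha hu₂ hcost₂
  have hpeak : univ.sup' ⟨⟨0, hT⟩, mem_univ _⟩ (gstar E₂) ≤
      univ.sup' ⟨⟨0, hT⟩, mem_univ _⟩ (gstar E₁) := by
    refine sup'_le _ _ fun t _ => ?_
    obtain ⟨t', ht'⟩ := hopt.exists_le_of_poolFeasible ha (hu₁.mono hE) t
    rw [hg₂]
    exact ht'.trans ((hg₁ t').symm.trans_le (le_sup' _ (mem_univ t')))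
  exact ⟨by gcongr, hpeak⟩
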